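/- arXiv:2107.10699 — 2 statements merged into one kernel-verified Lean document; each statement's English description precedes it below -/
import Mathlib

section
/- Let {ψ_m}_{m ∈ ℤ², |m|_∞ ≤ a} be an orthonormal family in L²(ℝ²) such that for some δ > 0 and constant C₀, ∫ (1 + |x₁ − m₁| + |x₂ − m₂|)^{2(1+δ)} |ψ_m(x)|² dx ≤ C₀ for every m. Let P_a := Σ_{|m|_∞ ≤ a} |ψ_m⟩⟨ψ_m| and let χ_{a+b} be multiplication by the indicator of [−(a+b), a+b)². Then for all a, b ≥ 1, ‖(1 − χ_{a+b}) P_a‖²_{HS} ≤ C a² b^{−2(1+δ)} for a constant C depending only on C₀ and δ. -/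
/-!
A point outside `box (a + b)` lies at distance at least `b` (in one coordinate) from every centre
`m` with `|m|_∞ ≤ a`, so there the localization weight is at least `b ^ (2(1+δ))`. A Chebyshev-type
estimate then bounds each term of the sum by `C₀ b ^ (-2(1+δ))`, and there are at most
`(2a + 1)² ≤ 9a²` such centres.
-/

open MeasureTheory Real
open scoped ENNReal

noncomputable section

abbrev Plane := EuclideanSpace ℝ (Fin 2)
abbrev H2 := Lp ℂ 2 (volume : Measure Plane)

/-- The square `[-c, c)²` in the plane. -/
def box (c : ℝ) : Set Plane := {x | x 0 ∈ Set.Ico (-c) c ∧ x 1 ∈ Set.Ico (-c) c}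

theorem measurableSet_box (c : ℝ) : MeasurableSet (box c) :=
  (measurableSet_Ico.preimage (by fun_prop)).inter (measurableSet_Ico.preimage (by fun_prop))

theorem le_abs_sub_of_notMem_Ico {a b m t : ℝ} (hm : |m| ≤ a)
    (ht : t ∉ Set.Ico (-(a + b)) (a + b)) : b ≤ |t - m| := by
  rw [Set.mem_Ico, not_and_or, not_le, not_lt] at ht
  rw [abs_le] at hm
  rw [le_abs']
  rcases ht with h | h
  · left; linarith
  · right; linarith

theorem le_one_add_abs_sub_add_abs_sub_of_notMem_box {a b : ℝ} {m : ℤ × ℤ} {x : Plane}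
    (hm₁ : (|m.1| : ℝ) ≤ a) (hm₂ : (|m.2| : ℝ) ≤ a) (hx : x ∉ box (a + b)) :
    b ≤ 1 + |x 0 - m.1| + |x 1 - m.2| := by
  have h₁ := abs_nonneg (x 0 - m.1)
  have h₂ := abs_nonneg (x 1 - m.2)
  rcases not_and_or.mp hx with h | h
  · linarith [le_abs_sub_of_notMem_Ico hm₁ h]
  · linarith [le_abs_sub_of_notMem_Ico hm₂ h]

theorem setLIntegral_le_rpow_neg_mul_lintegral_rpow_mul {α : Type*} [MeasurableSpace α]
    {μ : Measure α} {s : Set α} (hs : MeasurableSet s) {w f : α → ℝ} {b p : ℝ} (hb : 0 < b)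
    (hp : 0 ≤ p) (hbw : ∀ x ∈ s, b ≤ w x) (hf : ∀ x, 0 ≤ f x) :
    ∫⁻ x in s, ENNReal.ofReal (f x) ∂μ
      ≤ ENNReal.ofReal (b ^ (-p)) * ∫⁻ x, ENNReal.ofReal (w x ^ p * f x) ∂μ := by
  have hpoint : ∀ x ∈ s, ENNReal.ofReal (f x)
      ≤ ENNReal.ofReal (b ^ (-p)) * ENNReal.ofReal (w x ^ p * f x) := by
    intro x hx
    have hone : 1 ≤ b ^ (-p) * w x ^ p := by
      rw [rpow_neg hb.le, inv_mul_eq_div, one_le_div (rpow_pos_of_pos hb p)]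
      exact rpow_le_rpow hb.le (hbw x hx) hp
    rw [← ENNReal.ofReal_mul (rpow_nonneg hb.le _), ← mul_assoc]
    exact ENNReal.ofReal_le_ofReal (le_mul_of_one_le_left (hf x) hone)
  calc ∫⁻ x in s, ENNReal.ofReal (f x) ∂μ
      ≤ ∫⁻ x in s, ENNReal.ofReal (b ^ (-p)) * ENNReal.ofReal (w x ^ p * f x) ∂μ :=
        setLIntegral_mono' hs hpoint
    _ ≤ ∫⁻ x, ENNReal.ofReal (b ^ (-p)) * ENNReal.ofReal (w x ^ p * f x) ∂μ :=
        setLIntegral_le_lintegral _ _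
    _ = ENNReal.ofReal (b ^ (-p)) * ∫⁻ x, ENNReal.ofReal (w x ^ p * f x) ∂μ :=
        lintegral_const_mul' _ _ ENNReal.ofReal_ne_top

theorem Int.mem_Icc_neg_floor_of_abs_le {a : ℝ} {m : ℤ} (hm : (|m| : ℝ) ≤ a) :
    m ∈ Finset.Icc (-⌊a⌋) ⌊a⌋ := by
  have : |m| ≤ ⌊a⌋ := Int.le_floor.mpr (by exact_mod_cast hm)
  exact Finset.mem_Icc.mpr (abs_le.mp this)

theorem Int.card_Icc_neg_floor_le {a : ℝ} (ha : 0 ≤ a) :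
    ((Finset.Icc (-⌊a⌋) ⌊a⌋).card : ℝ) ≤ 2 * a + 1 := by
  have hn : 0 ≤ ⌊a⌋ := Int.floor_nonneg.mpr ha
  rw [Int.card_Icc, ← Int.cast_natCast, Int.toNat_of_nonneg (by omega)]
  push_cast
  linarith [Int.floor_le a]

theorem tsum_ite_abs_le_le_mul {a : ℝ} (ha : 0 ≤ a) {F : ℤ × ℤ → ℝ≥0∞} {B : ℝ≥0∞}
    (hF : ∀ m : ℤ × ℤ, (|m.1| : ℝ) ≤ a → (|m.2| : ℝ) ≤ a → F m ≤ B) :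
    (∑' m : ℤ × ℤ, if (|m.1| : ℝ) ≤ a ∧ (|m.2| : ℝ) ≤ a then F m else 0)
      ≤ ENNReal.ofReal ((2 * a + 1) ^ 2) * B := by
  classical
  set I := Finset.Icc (-⌊a⌋) ⌊a⌋
  have hzero : ∀ m ∉ I ×ˢ I, (if (|m.1| : ℝ) ≤ a ∧ (|m.2| : ℝ) ≤ a then F m else 0) = 0 :=
    fun m hm => if_neg fun h => hm (Finset.mem_product.mpr
      ⟨Int.mem_Icc_neg_floor_of_abs_le h.1, Int.mem_Icc_neg_floor_of_abs_le h.2⟩)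
  have hcard : ((I ×ˢ I).card : ℝ≥0∞) ≤ ENNReal.ofReal ((2 * a + 1) ^ 2) := by
    rw [Finset.card_product, ← ENNReal.ofReal_natCast, Nat.cast_mul, sq]
    exact ENNReal.ofReal_le_ofReal
      (mul_le_mul (Int.card_Icc_neg_floor_le ha) (Int.card_Icc_neg_floor_le ha)
        (Nat.cast_nonneg _) (by linarith))
  rw [tsum_eq_sum hzero]
  calc _ ≤ (I ×ˢ I).card • B := Finset.sum_le_card_nsmul _ _ _ fun m _ => by
          split_ifs with h
          · exact hF m h.1 h.2
          · exact zero_le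
    _ ≤ _ := by rw [nsmul_eq_mul]; gcongr

/-- near-boundary estimate.  For a (1+δ)-localized orthonormal family
{ψ_m}, the Hilbert–Schmidt norm
‖(1 − χ_{a+b}) P_a‖²_{HS} = Σ_{|m|_∞ ≤ a} ‖(1 − χ_{a+b}) ψ_m‖² ≤ C a² b^{−2(1+δ)}. -/
theorem stmt3 (δ C₀ : ℝ) (hδ : 0 < δ) :
    ∃ C : ℝ, ∀ (ψ : ℤ × ℤ → H2), Orthonormal ℂ ψ →
      (∀ m : ℤ × ℤ, ∫⁻ x, ENNReal.ofReal
          ((1 + |x 0 - (m.1 : ℝ)| + |x 1 - (m.2 : ℝ)|) ^ (2 * (1 + δ))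
            * ‖(ψ m : Plane → ℂ) x‖ ^ 2) ≤ ENNReal.ofReal C₀) →
      ∀ a b : ℝ, 1 ≤ a → 1 ≤ b →
        (∑' m : ℤ × ℤ,
            if (|m.1| : ℝ) ≤ a ∧ (|m.2| : ℝ) ≤ a then
              ∫⁻ x in (box (a + b))ᶜ, ENNReal.ofReal (‖(ψ m : Plane → ℂ) x‖ ^ 2)
            else 0)
          ≤ ENNReal.ofReal (C * a ^ 2 * b ^ (-(2 * (1 + δ)))) := by
  refine ⟨9 * max C₀ 0, fun ψ _ hloc a b ha hb => ?_⟩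
  set p := 2 * (1 + δ)
  have hb₀ : 0 < b := by linarith
  have hbound : ∀ m : ℤ × ℤ, (|m.1| : ℝ) ≤ a → (|m.2| : ℝ) ≤ a →
      ∫⁻ x in (box (a + b))ᶜ, ENNReal.ofReal (‖(ψ m : Plane → ℂ) x‖ ^ 2)
        ≤ ENNReal.ofReal (b ^ (-p)) * ENNReal.ofReal (max C₀ 0) := fun m hm₁ hm₂ =>
    (setLIntegral_le_rpow_neg_mul_lintegral_rpow_mul (measurableSet_box _).compl hb₀
      (by positivity) (fun _ hx => le_one_add_abs_sub_add_abs_sub_of_notMem_box hm₁ hm₂ hx)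
      (fun _ => sq_nonneg _)).trans
      (mul_le_mul_right ((hloc m).trans (ENNReal.ofReal_le_ofReal (le_max_left _ _))) _)
  refine (tsum_ite_abs_le_le_mul (by linarith) hbound).trans ?_
  rw [← ENNReal.ofReal_mul (by positivity), ← ENNReal.ofReal_mul (by positivity)]
  refine ENNReal.ofReal_le_ofReal ?_
  have hsq : (2 * a + 1) ^ 2 ≤ 9 * a ^ 2 := by nlinarith
  calc (2 * a + 1) ^ 2 * (b ^ (-p) * max C₀ 0) ≤ 9 * a ^ 2 * (b ^ (-p) * max C₀ 0) := by
        gcongr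
    _ = 9 * max C₀ 0 * a ^ 2 * b ^ (-p) := by ring
end
end

section
/- Let P be an orthogonal projection, P_L a finite-rank orthogonal sub-projection (P_L = P_L P = P P_L), and X, Y bounded self-adjoint operators commuting with each other, all on a Hilbert space. Then tr(P_L [[X,P],[Y,P]] P_L) = tr(P_L X (P − P_L) Y P_L − P_L Y (P − P_L) X P_L). -/
open scoped InnerProductSpace

/-- for an orthogonal projection P, a finite-rank orthogonal
sub-projection P_L (P_L = P_L P = P P_L), and commuting bounded self-adjoint X, Y,
tr(P_L [[X,P],[Y,P]] P_L) = tr(P_L X (P − P_L) Y P_L − P_L Y (P − P_L) X P_L),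
with the trace computed along any Hilbert basis. -/
theorem stmt13 {H : Type*} [NormedAddCommGroup H] [InnerProductSpace ℂ H]
    [CompleteSpace H] (P PL X Y : H →L[ℂ] H)
    (hPid : IsIdempotentElem P) (hPsa : IsSelfAdjoint P)
    (hPLid : IsIdempotentElem PL) (hPLsa : IsSelfAdjoint PL)
    (hsub1 : P * PL = PL) (hsub2 : PL * P = PL)
    (hfin : Module.Finite ℂ (LinearMap.range (PL : H →ₗ[ℂ] H)))
    (hX : IsSelfAdjoint X) (hY : IsSelfAdjoint Y) (hXY : Commute X Y)
    (ι : Type*) (e : HilbertBasis ι ℂ H) :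
    (∑' i, @inner ℂ H _ (e i)
        ((PL * ((X * P - P * X) * (Y * P - P * Y) - (Y * P - P * Y) * (X * P - P * X))
          * PL) (e i)))
      = ∑' i, @inner ℂ H _ (e i)
          ((PL * X * (P - PL) * Y * PL - PL * Y * (P - PL) * X * PL) (e i)) := by
  classical
  -- self-adjointness of PL at the level of inner products
  have hPLinner : ∀ u v : H, ⟪u, PL v⟫_ℂ = ⟪PL u, v⟫_ℂ := by
    intro u v
    conv_lhs => rw [← hPLsa.star_eq, ContinuousLinearMap.star_eq_adjoint]
    exact ContinuousLinearMap.adjoint_inner_right PL u v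
  -- the finite-dimensional range of PL and an orthonormal basis of it
  set K := LinearMap.range (PL : H →ₗ[ℂ] H) with hK
  haveI : FiniteDimensional ℂ K := hfin
  set b := stdOrthonormalBasis ℂ K with hb
  set f : Fin (Module.finrank ℂ K) → H := fun k => (b k : H) with hf
  have hfix : ∀ k, PL (f k) = f k := by
    intro k
    obtain ⟨x, hx⟩ := (b k).2
    have : PL ((PL : H →ₗ[ℂ] H) x) = (PL : H →ₗ[ℂ] H) x := by
      simp only [ContinuousLinearMap.coe_coe]
      show (PL * PL) x = PL x
      rw [hPLid.eq]
    simpa [hf, hx] using this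
  have horth : ∀ k l, ⟪f k, f l⟫_ℂ = if k = l then 1 else 0 := by
    intro k l
    have := orthonormal_iff_ite.mp b.orthonormal k l
    simpa [hf, Submodule.coe_inner] using this
  -- PL acts as the orthogonal projection onto K
  have hPLrep : ∀ u : H, PL u = ∑ k, ⟪f k, u⟫_ℂ • f k := by
    intro u
    have hmem : PL u ∈ K := ⟨u, rfl⟩
    have h1 : (∑ k, ⟪b k, (⟨PL u, hmem⟩ : K)⟫_ℂ • b k) = (⟨PL u, hmem⟩ : K) :=
      b.sum_repr' ⟨PL u, hmem⟩
    have h2 := congrArg (Subtype.val) h1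
    simp only [Submodule.coe_sum, Submodule.coe_smul] at h2
    have h3 : ∀ k, ⟪b k, (⟨PL u, hmem⟩ : K)⟫_ℂ = ⟪f k, u⟫_ℂ := by
      intro k
      rw [Submodule.coe_inner]
      show ⟪f k, PL u⟫_ℂ = ⟪f k, u⟫_ℂ
      rw [hPLinner, hfix]
    rw [← h2]
    exact Finset.sum_congr rfl fun k _ => by rw [h3]
  -- key trace formula: trace of PL * S * PL along e is a finite sum over f
  have key : ∀ S : H →L[ℂ] H,
      (∑' i, ⟪e i, (PL * S * PL) (e i)⟫_ℂ) = ∑ k, ⟪f k, S (f k)⟫_ℂ := by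
    intro S
    have hterm : ∀ i, ⟪e i, (PL * S * PL) (e i)⟫_ℂ
        = ∑ k, ∑ l, (⟪f l, e i⟫_ℂ * ⟪e i, f k⟫_ℂ) * ⟪f k, S (f l)⟫_ℂ := by
      intro i
      have : (PL * S * PL) (e i) = PL (S (PL (e i))) := rfl
      rw [this, hPLinner, hPLrep (e i)]
      rw [map_sum]
      rw [sum_inner, Finset.sum_congr rfl (fun k _ => inner_sum _ _ _)]
      refine Finset.sum_congr rfl fun k _ => Finset.sum_congr rfl fun l _ => ?_
      rw [ContinuousLinearMap.map_smul, inner_smul_left, inner_smul_right,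
        inner_conj_symm]
      ring
    calc (∑' i, ⟪e i, (PL * S * PL) (e i)⟫_ℂ)
        = ∑' i, ∑ k, ∑ l, (⟪f l, e i⟫_ℂ * ⟪e i, f k⟫_ℂ) * ⟪f k, S (f l)⟫_ℂ := by
          exact tsum_congr hterm
      _ = ∑ k, ∑ l, ∑' i, (⟪f l, e i⟫_ℂ * ⟪e i, f k⟫_ℂ) * ⟪f k, S (f l)⟫_ℂ := by
          rw [Summable.tsum_finsetSum]
          · exact Finset.sum_congr rfl fun k _ => Summable.tsum_finsetSum
              (fun l _ => ((e.summable_inner_mul_inner (f l) (f k)).mul_right _))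
          · intro k _
            exact summable_sum fun l _ =>
              ((e.summable_inner_mul_inner (f l) (f k)).mul_right _)
      _ = ∑ k, ∑ l, ⟪f l, f k⟫_ℂ * ⟪f k, S (f l)⟫_ℂ := by
          refine Finset.sum_congr rfl fun k _ => Finset.sum_congr rfl fun l _ => ?_
          rw [tsum_mul_right, e.tsum_inner_mul_inner]
      _ = ∑ k, ⟪f k, S (f k)⟫_ℂ := by
          refine Finset.sum_congr rfl fun k _ => ?_
          rw [Finset.sum_eq_single k]
          · rw [horth, if_pos rfl, one_mul]
          · intro l _ hl
            rw [horth, if_neg hl, zero_mul]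
          · intro h; exact absurd (Finset.mem_univ k) h
    -- operator identities
  have e1 : P * P = P := hPid
  have e2 : PL * PL = PL := hPLid
  have a1 : ∀ Z : H →L[ℂ] H, P * (P * Z) = P * Z := fun Z => by rw [← mul_assoc, e1]
  have a2 : ∀ Z : H →L[ℂ] H, PL * (P * Z) = PL * Z := fun Z => by rw [← mul_assoc, hsub2]
  have a3 : ∀ Z : H →L[ℂ] H, P * (PL * Z) = PL * Z := fun Z => by rw [← mul_assoc, hsub1]
  have a4 : ∀ Z : H →L[ℂ] H, PL * (PL * Z) = PL * Z := fun Z => by rw [← mul_assoc, e2]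
  have cxy : ∀ Z : H →L[ℂ] H, X * (Y * Z) = Y * (X * Z) := fun Z => by
    rw [← mul_assoc, ← mul_assoc, hXY.eq]
  have hop : PL * ((X * P - P * X) * (Y * P - P * Y) - (Y * P - P * Y) * (X * P - P * X)) * PL
      = PL * (X * (P - PL) * Y - Y * (P - PL) * X) * PL
        + ((PL * X * PL) * (PL * Y * PL) - (PL * Y * PL) * (PL * X * PL)) := by
    simp only [mul_sub, sub_mul, mul_assoc, a1, a2, a3, a4, e1, e2, hsub1, hsub2, cxy]
    abel
  have hR : PL * X * (P - PL) * Y * PL - PL * Y * (P - PL) * X * PL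
      = PL * (X * (P - PL) * Y - Y * (P - PL) * X) * PL := by noncomm_ring
  rw [hR, key, key]
  -- now compare the finite sums
  have hconj : ∀ (S : H →L[ℂ] H) (k), ⟪f k, S (f k)⟫_ℂ = ⟪f k, (PL * S * PL) (f k)⟫_ℂ := by
    intro S k
    show _ = ⟪f k, PL (S (PL (f k)))⟫_ℂ
    rw [hfix, hPLinner, hfix]
  have expand : ∀ (U V : H →L[ℂ] H),
      (∑ k, ⟪f k, ((PL * U * PL) * (PL * V * PL)) (f k)⟫_ℂ)
        = ∑ k, ∑ l, ⟪f l, V (f k)⟫_ℂ * ⟪f k, U (f l)⟫_ℂ := by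
    intro U V
    refine Finset.sum_congr rfl fun k _ => ?_
    have : ((PL * U * PL) * (PL * V * PL)) (f k) = PL (U (PL (PL (V (PL (f k)))))) := rfl
    rw [this, hfix, hPLinner, hfix]
    rw [hPLrep (V (f k)), map_sum, map_sum, inner_sum]
    refine Finset.sum_congr rfl fun l _ => ?_
    rw [ContinuousLinearMap.map_smul, ContinuousLinearMap.map_smul, inner_smul_right]
    congr 1
    rw [hfix]
  calc (∑ k, ⟪f k, ((X * P - P * X) * (Y * P - P * Y)
          - (Y * P - P * Y) * (X * P - P * X)) (f k)⟫_ℂ)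
      = ∑ k, ⟪f k, (PL * ((X * P - P * X) * (Y * P - P * Y)
          - (Y * P - P * Y) * (X * P - P * X)) * PL) (f k)⟫_ℂ :=
        Finset.sum_congr rfl fun k _ => hconj _ k
    _ = ∑ k, ⟪f k, ((PL * (X * (P - PL) * Y - Y * (P - PL) * X) * PL)
          + ((PL * X * PL) * (PL * Y * PL) - (PL * Y * PL) * (PL * X * PL))) (f k)⟫_ℂ := by
        rw [hop]
    _ = ∑ k, (⟪f k, (PL * (X * (P - PL) * Y - Y * (P - PL) * X) * PL) (f k)⟫_ℂ
          + (⟪f k, ((PL * X * PL) * (PL * Y * PL)) (f k)⟫_ℂ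
            - ⟪f k, ((PL * Y * PL) * (PL * X * PL)) (f k)⟫_ℂ)) := by
        refine Finset.sum_congr rfl fun k _ => ?_
        simp [ContinuousLinearMap.add_apply, ContinuousLinearMap.sub_apply, inner_add_right,
          inner_sub_right]
    _ = ∑ k, ⟪f k, (PL * (X * (P - PL) * Y - Y * (P - PL) * X) * PL) (f k)⟫_ℂ := by
        rw [Finset.sum_add_distrib]
        have : (∑ k, (⟪f k, ((PL * X * PL) * (PL * Y * PL)) (f k)⟫_ℂ
            - ⟪f k, ((PL * Y * PL) * (PL * X * PL)) (f k)⟫_ℂ)) = 0 := by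
          rw [Finset.sum_sub_distrib, expand, expand, Finset.sum_comm, sub_eq_zero]
          exact Finset.sum_congr rfl fun k _ => Finset.sum_congr rfl fun l _ =>
            mul_comm _ _
        rw [this, add_zero]
    _ = ∑ k, ⟪f k, (X * (P - PL) * Y - Y * (P - PL) * X) (f k)⟫_ℂ :=
        Finset.sum_congr rfl fun k _ => (hconj _ k).symm
end
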